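/- Let X be a normed space, W : X → Y a surjective bounded linear map between normed spaces with closed kernel K. If the quotient X/K is isometrically isomorphic to a subspace Z ⊆ X on which W restricts to a bijection, then W restricted to Z is an isometric isomorphism onto Y when Y carries the quotient-induced norm. Concretely, for D compact, Ξ ⊂ D finite, and w : D → ℝ ∪ {+∞} upper semicontinuous with 1/w continuous on D, positive off Ξ, and w ≡ +∞ on Ξ ∩ D: the map W : M(D,H) → M_w(D,H) defined by dW(v) = (1/w) v' d|v| is well-defined and surjective, its kernel equals the measures supported on Ξ ∩ D, and its restriction to M(D \ Ξ, H) is an isometric isomorphism onto M_w(D,H) with ‖W v‖_{M_w} = ‖v‖_{M} where ‖u‖_{M_w} = ∫ w d|u|. -/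

import Mathlib

set_option maxHeartbeats 1000000


open NormedSpace

section

variable {D H : Type*} [MetricSpace D] [CompactSpace D]
  [NormedAddCommGroup H] [InnerProductSpace ℝ H]

/-- The `H`-valued vector measure `c δ_x` as an element of the dual of `C(D, H)`. -/
noncomputable def dirac (c : H) (x : D) : StrongDual ℝ C(D, H) :=
  (innerSL ℝ c).comp (ContinuousMap.evalCLM ℝ x)

/-- Pointwise multiplication by the continuous function `invw = 1/w` on `C(D,H)`. -/
noncomputable def mulBy (invw : C(D, ℝ)) : C(D, H) →L[ℝ] C(D, H) :=
  LinearMap.mkContinuous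
    { toFun := fun φ => invw • φ
      map_add' := fun φ ψ => smul_add invw φ ψ
      map_smul' := fun r φ => by
        ext z
        exact smul_comm (invw z) r (φ z) }
    ‖invw‖ (fun φ => by
      refine (ContinuousMap.norm_le _ (by positivity)).mpr fun z => ?_
      show ‖invw z • φ z‖ ≤ ‖invw‖ * ‖φ‖
      rw [norm_smul]
      exact mul_le_mul (invw.norm_coe_le_norm z) (φ.norm_coe_le_norm z)
        (norm_nonneg _) (norm_nonneg _))

/-- The reweighting map `W : M(D,H) → M(D,H)`, `dW(v) = (1/w) v' d|v|`, realized as the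
adjoint of multiplication by `1/w`:  `⟨W v, φ⟩ = ⟨v, (1/w) φ⟩`. -/
noncomputable def Wmap (invw : C(D, ℝ)) :
    StrongDual ℝ C(D, H) →ₗ[ℝ] StrongDual ℝ C(D, H) where
  toFun v := v.comp (mulBy invw)
  map_add' v₁ v₂ := ContinuousLinearMap.add_comp v₁ v₂ (mulBy invw)
  map_smul' r v := ContinuousLinearMap.smul_comp r v (mulBy invw)

/-- The set of pairings `⟨u, φ⟩` of `u` with test functions in the weighted unit ball
`{φ : ‖φ(x)‖ ≤ w(x) ∀ x}`, i.e. `(1/w(x))·‖φ(x)‖ ≤ 1`.  By duality,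
`u ∈ M_w(D,H)` iff this set is bounded above, and its supremum is the weighted total
variation norm `‖u‖_{M_w} = ∫ w d|u|`. -/
def wPairings (invw : C(D, ℝ)) (u : StrongDual ℝ C(D, H)) : Set ℝ :=
  {r : ℝ | ∃ φ : C(D, H), (∀ z : D, invw z * ‖φ z‖ ≤ 1) ∧ r = u φ}

/-- `v ∈ M(D ∖ Ξ, H)`, i.e. the total variation of `v` puts no mass on the finite set
`Ξ`: the total variation norm of `v` is already attained by test functions in the unit
ball vanishing on `Ξ`. -/
def vanishesOn (Ξ : Finset D) (v : StrongDual ℝ C(D, H)) : Prop :=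
  ∀ ε : ℝ, 0 < ε → ∃ φ : C(D, H), ‖φ‖ ≤ 1 ∧ (∀ z ∈ Ξ, φ z = 0) ∧ ‖v‖ - ε ≤ v φ

end

section Helpers

open NormedSpace

variable {D H : Type*} [MetricSpace D] [CompactSpace D]
  [NormedAddCommGroup H] [InnerProductSpace ℝ H]

lemma mulBy_apply' (invw : C(D, ℝ)) (φ : C(D, H)) (z : D) :
    mulBy invw φ z = invw z • φ z := rfl

lemma Wmap_apply' (invw : C(D, ℝ)) (v : StrongDual ℝ C(D, H)) (φ : C(D, H)) :
    Wmap invw v φ = v (mulBy invw φ) := rfl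

lemma dirac_apply' (c : H) (x : D) (φ : C(D, H)) :
    dirac c x φ = inner ℝ c (φ x) := rfl

lemma norm_mulBy_le_one (invw : C(D, ℝ)) (hpos : ∀ z : D, 0 ≤ invw z) (φ : C(D, H))
    (h : ∀ z : D, invw z * ‖φ z‖ ≤ 1) : ‖mulBy invw (H := H) φ‖ ≤ 1 := by
  refine (ContinuousMap.norm_le _ one_pos.le).mpr fun z => ?_
  rw [mulBy_apply', norm_smul, Real.norm_eq_abs, abs_of_nonneg (hpos z)]
  exact h z

/-- Key approximation lemma. -/
lemma approx_lemma (Ξ : Finset D) (invw : C(D, ℝ)) (hpos : ∀ z : D, 0 ≤ invw z)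
    (hzero : ∀ z : D, invw z = 0 ↔ z ∈ Ξ)
    (ψ : C(D, H)) (hψ : ∀ z ∈ Ξ, ψ z = 0) {ε : ℝ} (hε : 0 < ε) :
    ∃ φ : C(D, H), (∀ z : D, ‖mulBy invw φ z‖ ≤ ‖ψ z‖) ∧ ‖mulBy invw φ - ψ‖ ≤ ε := by
  classical
  -- find a positive lower bound for invw on the set where ‖ψ‖ ≥ ε
  obtain ⟨c, hc, hcK⟩ : ∃ c : ℝ, 0 < c ∧ ∀ x : D, ε ≤ ‖ψ x‖ → c ≤ invw x := by
    set K : Set D := {x | ε ≤ ‖ψ x‖} with hK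
    have hKclosed : IsClosed K := isClosed_le continuous_const (ψ.continuous.norm)
    rcases K.eq_empty_or_nonempty with hKe | hKne
    · exact ⟨1, one_pos, fun x hx => absurd (hK ▸ hx : x ∈ K) (by simp [hKe])⟩
    · obtain ⟨x₀, hx₀K, hx₀min⟩ :=
        hKclosed.isCompact.exists_isMinOn hKne invw.continuous.continuousOn
      refine ⟨invw x₀, ?_, fun x hx => hx₀min hx⟩
      rcases (hpos x₀).lt_or_eq with h | h
      · exact h
      · exfalso
        have : x₀ ∈ Ξ := (hzero x₀).mp h.symm
        have : ψ x₀ = 0 := hψ x₀ this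
        have h0 : (ε : ℝ) ≤ ‖ψ x₀‖ := hx₀K
        rw [this, norm_zero] at h0
        linarith
  set δ : ℝ := ε * c ^ 2 / (‖ψ‖ + 1) with hδdef
  have hδ : 0 < δ := by positivity
  set g : C(D, ℝ) := ⟨fun x => invw x / (invw x ^ 2 + δ), by
    exact (invw.continuous.div ((invw.continuous.pow 2).add continuous_const)
      (fun x => by positivity))⟩ with hg
  refine ⟨g • ψ, ?_, ?_⟩
  · intro z
    have hd : (0:ℝ) < invw z ^ 2 + δ := by positivity
    rw [mulBy_apply']
    show ‖invw z • (g z • ψ z)‖ ≤ ‖ψ z‖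
    rw [smul_smul, norm_smul, Real.norm_eq_abs]
    have : invw z * g z = invw z ^ 2 / (invw z ^ 2 + δ) := by
      show invw z * (invw z / (invw z ^ 2 + δ)) = _
      field_simp
    rw [this, abs_of_nonneg (by positivity)]
    nlinarith [norm_nonneg (ψ z), sq_nonneg (invw z), div_le_one_of_le₀
      (by nlinarith : invw z ^ 2 ≤ invw z ^ 2 + δ) hd.le]
  · refine (ContinuousMap.norm_le _ hε.le).mpr fun x => ?_
    have hd : (0:ℝ) < invw x ^ 2 + δ := by positivity
    have heval : (mulBy invw (g • ψ) - ψ) x = (invw x * g x - 1) • ψ x := by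
      show invw x • (g x • ψ x) - ψ x = (invw x * g x - 1) • ψ x
      rw [smul_smul, sub_smul, one_smul]
    rw [heval, norm_smul, Real.norm_eq_abs]
    have hval : invw x * g x - 1 = -(δ / (invw x ^ 2 + δ)) := by
      show invw x * (invw x / (invw x ^ 2 + δ)) - 1 = _
      field_simp
      ring
    rw [hval, abs_neg, abs_of_nonneg (by positivity)]
    by_cases hx : ε ≤ ‖ψ x‖
    · have h1 : c ≤ invw x := hcK x hx
      have h2 : δ / (invw x ^ 2 + δ) ≤ δ / c ^ 2 := by
        apply div_le_div_of_nonneg_left hδ.le (by positivity)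
        nlinarith
      have h3 : ‖ψ x‖ ≤ ‖ψ‖ := ψ.norm_coe_le_norm x
      have h4 : δ / c ^ 2 * ‖ψ‖ ≤ ε := by
        rw [hδdef]
        rw [div_mul_eq_mul_div, div_le_iff₀ (by positivity : (0:ℝ) < c ^ 2)]
        rw [div_mul_eq_mul_div, div_le_iff₀ (by positivity : (0:ℝ) < ‖ψ‖ + 1)] at *
        nlinarith [norm_nonneg ψ]
      calc δ / (invw x ^ 2 + δ) * ‖ψ x‖ ≤ δ / c ^ 2 * ‖ψ‖ := by
            apply mul_le_mul h2 h3 (norm_nonneg _) (by positivity)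
        _ ≤ ε := h4
    · push_neg at hx
      have h2 : δ / (invw x ^ 2 + δ) ≤ 1 := by
        apply div_le_one_of_le₀ (by nlinarith) hd.le
      nlinarith [norm_nonneg (ψ x)]

end Helpers
section Helpers2

open NormedSpace

variable {D H : Type*} [MetricSpace D] [CompactSpace D]
  [NormedAddCommGroup H] [InnerProductSpace ℝ H]

/-- If `Wmap invw v = 0` then `v` kills every function vanishing on `Ξ`. -/
lemma kills_of_W_eq_zero (Ξ : Finset D) (invw : C(D, ℝ)) (hpos : ∀ z : D, 0 ≤ invw z)
    (hzero : ∀ z : D, invw z = 0 ↔ z ∈ Ξ) (v : StrongDual ℝ C(D, H))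
    (hv : Wmap invw v = 0) (ψ : C(D, H)) (hψ : ∀ z ∈ Ξ, ψ z = 0) : v ψ = 0 := by
  have key : ∀ ε' : ℝ, 0 < ε' → |v ψ| ≤ 0 + ε' := by
    intro ε' hε'
    obtain ⟨φ, _, hclose⟩ := approx_lemma Ξ invw hpos hzero ψ hψ
      (show (0:ℝ) < ε' / (‖v‖ + 1) by positivity)
    have h0 : v (mulBy invw φ) = 0 := by
      have := congrArg (fun u => u φ) hv
      simpa [Wmap_apply'] using this
    have : |v ψ| = |v (mulBy invw φ - ψ)| := by
      rw [map_sub, h0, zero_sub, abs_neg]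
    rw [this, zero_add]
    calc |v (mulBy invw φ - ψ)| ≤ ‖v‖ * ‖mulBy invw φ - ψ‖ := v.le_opNorm _
      _ ≤ ‖v‖ * (ε' / (‖v‖ + 1)) := by
          apply mul_le_mul_of_nonneg_left hclose (norm_nonneg v)
      _ ≤ ε' := by
          rw [mul_div_assoc']
          rw [div_le_iff₀ (by positivity : (0:ℝ) < ‖v‖ + 1)]
          nlinarith [norm_nonneg v, hε'.le]
  have h := le_of_forall_pos_le_add key
  have := abs_nonneg (v ψ)
  have : |v ψ| = 0 := le_antisymm h (abs_nonneg _)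
  exact abs_eq_zero.mp this

/-- Bump functions at a point of `Ξ`. -/
lemma exists_chi (Ξ : Finset D) (z₀ : D) (δ : ℝ) (hδ : 0 < δ) :
    ∃ f : C(D, ℝ), f z₀ = 1 ∧ (∀ z ∈ Ξ, z ≠ z₀ → f z = 0) ∧
      (∀ x, f x ≠ 0 → dist x z₀ < δ) ∧ ∀ x, f x ∈ Set.Icc (0:ℝ) 1 := by
  classical
  set s : Set D := (↑(Ξ.erase z₀) : Set D) ∪ {x | δ ≤ dist x z₀} with hs
  have hsc : IsClosed s :=
    ((Ξ.erase z₀).finite_toSet.isClosed).union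
      (isClosed_le continuous_const (by continuity))
  have hdisj : Disjoint s ({z₀} : Set D) := by
    rw [Set.disjoint_singleton_right]
    rintro (h | h)
    · exact (Finset.mem_erase.mp (by exact_mod_cast h)).1 rfl
    · simp only [Set.mem_setOf_eq, dist_self] at h; linarith
  obtain ⟨f, h0, h1, h01⟩ := exists_continuous_zero_one_of_isClosed hsc
    isClosed_singleton hdisj
  refine ⟨f, by simpa using h1 rfl, fun z hz hne => by
      simpa using h0 (Or.inl (by exact_mod_cast Finset.mem_erase.mpr ⟨hne, hz⟩)), ?_, h01⟩
  intro x hx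
  by_contra hc
  push_neg at hc
  exact hx (by simpa using h0 (Or.inr hc))

/-- `h ↦ f • const h` as a continuous linear map. -/
noncomputable def constL (f : C(D, ℝ)) : H →L[ℝ] C(D, H) :=
  LinearMap.mkContinuous
    { toFun := fun h => f • ContinuousMap.const D h
      map_add' := fun h h' => by ext x; exact smul_add (f x) h h'
      map_smul' := fun r h => by ext x; exact smul_comm (f x) r h }
    ‖f‖ (fun h => by
      refine (ContinuousMap.norm_le _ (by positivity)).mpr fun x => ?_
      show ‖f x • h‖ ≤ ‖f‖ * ‖h‖
      rw [norm_smul, Real.norm_eq_abs]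
      exact mul_le_mul_of_nonneg_right (f.norm_coe_le_norm x) (norm_nonneg _))

lemma constL_apply (f : C(D, ℝ)) (h : H) (x : D) : constL (H := H) f h x = f x • h := rfl

end Helpers2
section Helpers3

open NormedSpace

variable {D H : Type*} [MetricSpace D] [CompactSpace D]
  [NormedAddCommGroup H] [InnerProductSpace ℝ H]

lemma kernel_iff [CompleteSpace H] (Ξ : Finset D) (invw : C(D, ℝ))
    (hpos : ∀ z : D, 0 ≤ invw z) (hzero : ∀ z : D, invw z = 0 ↔ z ∈ Ξ)
    (v : StrongDual ℝ C(D, H)) :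
    Wmap invw v = 0 ↔ ∃ c : D → H, v = ∑ z ∈ Ξ, dirac (c z) z := by
  classical
  constructor
  · intro hv
    choose f hf1 hf2 hf3 hf4 using fun z : {z // z ∈ Ξ} => exists_chi Ξ (z : D) 1 one_pos
    set c : D → H := fun z => if hz : z ∈ Ξ then
      (InnerProductSpace.toDual ℝ H).symm (v.comp (constL (f ⟨z, hz⟩))) else 0 with hcdef
    refine ⟨c, ?_⟩
    ext φ
    have hrhs : (∑ z ∈ Ξ, dirac (c z) z) φ
        = ∑ z ∈ Ξ.attach, v (constL (f z) (φ (z : D))) := by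
      rw [ContinuousLinearMap.sum_apply, ← Finset.sum_attach Ξ (fun z => dirac (c z) z φ)]
      refine Finset.sum_congr rfl fun z _ => ?_
      rw [dirac_apply', hcdef]
      simp only [z.2, dif_pos]
      rw [InnerProductSpace.toDual_symm_apply]
      rfl
    have hker : v (φ - ∑ z ∈ Ξ.attach, constL (f z) (φ (z : D))) = 0 := by
      apply kills_of_W_eq_zero Ξ invw hpos hzero v hv
      intro w hw
      have : (∑ z ∈ Ξ.attach, constL (f z) (φ (z : D))) w = φ w := by
        rw [ContinuousMap.coe_sum, Finset.sum_apply]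
        rw [Finset.sum_eq_single_of_mem (⟨w, hw⟩ : {z // z ∈ Ξ}) (Finset.mem_attach _ _)]
        · show f ⟨w, hw⟩ w • φ w = φ w
          rw [hf1 ⟨w, hw⟩, one_smul]
        · intro b _ hb
          show f b w • φ ((b : D)) = 0
          have hne : w ≠ (b : D) := fun h => hb (Subtype.ext h.symm)
          rw [hf2 b w hw hne, zero_smul]
      simp [this]
    rw [map_sub, map_sum, sub_eq_zero] at hker
    rw [hrhs]
    exact hker
  · rintro ⟨c, rfl⟩
    ext φ
    rw [Wmap_apply', ContinuousLinearMap.sum_apply]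
    rw [show (0 : StrongDual ℝ C(D,H)) φ = 0 from rfl]
    refine Finset.sum_eq_zero fun z hz => ?_
    rw [dirac_apply', mulBy_apply', (hzero z).mpr hz, zero_smul, inner_zero_right]
end Helpers3
section Helpers4

open NormedSpace

variable {D H : Type*} [MetricSpace D] [CompactSpace D]
  [NormedAddCommGroup H] [InnerProductSpace ℝ H]

/-- A measure vanishing on `Ξ` puts little mass near `Ξ`. -/
lemma small_near (Ξ : Finset D) (v : StrongDual ℝ C(D, H)) (hv : vanishesOn Ξ v)
    {ε : ℝ} (hε : 0 < ε) :
    ∃ δ : ℝ, 0 < δ ∧ ∀ χ : C(D, H), ‖χ‖ ≤ 1 →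
      (∀ x, χ x ≠ 0 → ∃ z ∈ Ξ, dist x z < δ) → v χ ≤ ε * (1 + ‖v‖) := by
  classical
  rcases Ξ.eq_empty_or_nonempty with hΞ | hΞ
  · refine ⟨1, one_pos, fun χ _ hsupp => ?_⟩
    have : χ = 0 := by
      ext x
      by_contra hx
      obtain ⟨z, hz, -⟩ := hsupp x hx
      simp [hΞ] at hz
    rw [this, map_zero]
    positivity
  obtain ⟨φ, hφ1, hφΞ, hφv⟩ := hv ε hε
  obtain ⟨δ₀, hδ₀, hδ₀c⟩ := Metric.uniformContinuous_iff.mp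
    (CompactSpace.uniformContinuous_of_continuous φ.continuous) ε hε
  refine ⟨δ₀ / 2, by positivity, fun χ hχ hsupp => ?_⟩
  set δ := δ₀ / 2 with hδdef
  have hΞne : (↑Ξ : Set D).Nonempty := hΞ.to_set
  -- small values of φ near Ξ
  have hφsmall : ∀ x : D, Metric.infDist x ↑Ξ < 2 * δ → ‖φ x‖ ≤ ε := by
    intro x hx
    obtain ⟨z, hz, hdz⟩ := (Metric.infDist_lt_iff hΞne).mp hx
    have : dist x z < δ₀ := by rw [hδdef] at hdz; linarith
    have := hδ₀c this
    rw [hφΞ z hz, dist_zero_right] at this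
    exact this.le
  -- the bump function
  set b : C(D, ℝ) := ⟨fun x => max 0 (min 1 ((2 * δ - Metric.infDist x ↑Ξ) / δ)),
    Continuous.max continuous_const (Continuous.min continuous_const
      ((continuous_const.sub (Metric.continuous_infDist_pt _)).div_const δ))⟩ with hb
  have hb01 : ∀ x, b x ∈ Set.Icc (0:ℝ) 1 :=
    fun x => ⟨le_max_left _ _, max_le (by norm_num) (min_le_left _ _)⟩
  have hbone : ∀ x, Metric.infDist x ↑Ξ ≤ δ → b x = 1 := by
    intro x hx
    show max 0 (min 1 ((2 * δ - Metric.infDist x ↑Ξ) / δ)) = 1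
    have hδpos : (0:ℝ) < δ := by positivity
    have : (1:ℝ) ≤ (2 * δ - Metric.infDist x ↑Ξ) / δ := by
      rw [le_div_iff₀ hδpos]
      have := Metric.infDist_nonneg (x := x) (s := (↑Ξ : Set D))
      linarith
    rw [min_eq_left this, max_eq_right (by norm_num)]
  have hbzero : ∀ x, 2 * δ ≤ Metric.infDist x ↑Ξ → b x = 0 := by
    intro x hx
    show max 0 (min 1 ((2 * δ - Metric.infDist x ↑Ξ) / δ)) = 0
    have hδpos : (0:ℝ) < δ := by positivity
    have h1 : (2 * δ - Metric.infDist x ↑Ξ) / δ ≤ 0 :=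
      div_nonpos_of_nonpos_of_nonneg (by linarith) hδpos.le
    rw [max_eq_left]
    exact le_trans (min_le_right _ _) h1
  -- the combined test function
  set η : C(D, H) := ((1 : C(D, ℝ)) - b) • φ + χ with hη
  have hηx : ∀ x, η x = (1 - b x) • φ x + χ x := fun x => rfl
  have hηnorm : ‖η‖ ≤ 1 := by
    refine (ContinuousMap.norm_le _ one_pos.le).mpr fun x => ?_
    rw [hηx]
    by_cases hx : χ x = 0
    · rw [hx, add_zero, norm_smul, Real.norm_eq_abs,
        abs_of_nonneg (by linarith [(hb01 x).2])]
      have h1 : 1 - b x ≤ 1 := by linarith [(hb01 x).1]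
      have h2 : ‖φ x‖ ≤ 1 := le_trans (φ.norm_coe_le_norm x) hφ1
      nlinarith [norm_nonneg (φ x), (hb01 x).2]
    · obtain ⟨z, hz, hdz⟩ := hsupp x hx
      have : Metric.infDist x ↑Ξ ≤ δ :=
        le_trans (Metric.infDist_le_dist_of_mem (by exact_mod_cast hz)) hdz.le
      rw [hbone x this, sub_self, zero_smul, zero_add]
      exact le_trans (χ.norm_coe_le_norm x) hχ
  have hbφ : ‖(b • φ : C(D, H))‖ ≤ ε := by
    refine (ContinuousMap.norm_le _ hε.le).mpr fun x => ?_
    show ‖b x • φ x‖ ≤ ε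
    by_cases hx : Metric.infDist x ↑Ξ < 2 * δ
    · rw [norm_smul, Real.norm_eq_abs, abs_of_nonneg (hb01 x).1]
      nlinarith [hφsmall x hx, (hb01 x).2, (hb01 x).1, norm_nonneg (φ x)]
    · push_neg at hx
      rw [hbzero x hx, zero_smul, norm_zero]
      exact hε.le
  have hdecomp : v η = v φ - v (b • φ) + v χ := by
    have : η = φ - b • φ + χ := by
      ext x
      rw [hηx]
      show (1 - b x) • φ x + χ x = φ x - b x • φ x + χ x
      rw [sub_smul, one_smul]
    rw [this, map_add, map_sub]
  have h1 : v η ≤ ‖v‖ := by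
    calc v η ≤ |v η| := le_abs_self _
      _ ≤ ‖v‖ * ‖η‖ := v.le_opNorm _
      _ ≤ ‖v‖ * 1 := mul_le_mul_of_nonneg_left hηnorm (norm_nonneg v)
      _ = ‖v‖ := mul_one _
  have h2 : v (b • φ) ≤ ‖v‖ * ε := by
    calc v (b • φ) ≤ |v (b • φ)| := le_abs_self _
      _ ≤ ‖v‖ * ‖(b • φ : C(D, H))‖ := v.le_opNorm _
      _ ≤ ‖v‖ * ε := mul_le_mul_of_nonneg_left hbφ (norm_nonneg v)
  have : v χ = v η - v φ + v (b • φ) := by rw [hdecomp]; ring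
  rw [this]
  nlinarith [norm_nonneg v]

end Helpers4
section Helpers5
set_option maxHeartbeats 1000000

open NormedSpace

variable {D H : Type*} [MetricSpace D] [CompactSpace D]
  [NormedAddCommGroup H] [InnerProductSpace ℝ H]

lemma injective_on_vanishesOn [CompleteSpace H] (Ξ : Finset D) (invw : C(D, ℝ))
    (hpos : ∀ z : D, 0 ≤ invw z) (hzero : ∀ z : D, invw z = 0 ↔ z ∈ Ξ)
    (v₁ v₂ : StrongDual ℝ C(D, H)) (h₁ : vanishesOn Ξ v₁) (h₂ : vanishesOn Ξ v₂)
    (hW : Wmap invw v₁ = Wmap invw v₂) : v₁ = v₂ := by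
  classical
  have hW0 : Wmap invw (v₁ - v₂) = 0 := by rw [map_sub, hW, sub_self]
  obtain ⟨c, hc⟩ := (kernel_iff Ξ invw hpos hzero (v₁ - v₂)).mp hW0
  have hinner : ∀ z₀ ∈ Ξ, ∀ h : H, ‖h‖ ≤ 1 → (inner ℝ (c z₀) h : ℝ) = 0 := by
    intro z₀ hz₀ h hh
    have key : ∀ ε' : ℝ, 0 < ε' → |(inner ℝ (c z₀) h : ℝ)| ≤ 0 + ε' := by
      intro ε' hε'
      set M : ℝ := 2 + ‖v₁‖ + ‖v₂‖ with hM
      have hMpos : 0 < M := by positivity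
      set ε : ℝ := ε' / M with hε
      have hεpos : 0 < ε := by positivity
      obtain ⟨δ₁, hδ₁, hs₁⟩ := small_near Ξ v₁ h₁ hεpos
      obtain ⟨δ₂, hδ₂, hs₂⟩ := small_near Ξ v₂ h₂ hεpos
      obtain ⟨f, hf1, hf2, hf3, hf4⟩ := exists_chi Ξ z₀ (min δ₁ δ₂) (lt_min hδ₁ hδ₂)
      set χ : C(D, H) := constL f h with hχ
      have hχnorm : ‖χ‖ ≤ 1 := by
        refine (ContinuousMap.norm_le _ one_pos.le).mpr fun x => ?_
        rw [constL_apply, norm_smul, Real.norm_eq_abs, abs_of_nonneg (hf4 x).1]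
        nlinarith [(hf4 x).2, (hf4 x).1, norm_nonneg h]
      have hsupp : ∀ x, χ x ≠ 0 → f x ≠ 0 := by
        intro x hx hf
        exact hx (by rw [hχ, constL_apply, hf, zero_smul])
      have hsupp₁ : ∀ x, χ x ≠ 0 → ∃ z ∈ Ξ, dist x z < δ₁ :=
        fun x hx => ⟨z₀, hz₀, lt_of_lt_of_le (hf3 x (hsupp x hx)) (min_le_left _ _)⟩
      have hsupp₂ : ∀ x, χ x ≠ 0 → ∃ z ∈ Ξ, dist x z < δ₂ :=
        fun x hx => ⟨z₀, hz₀, lt_of_lt_of_le (hf3 x (hsupp x hx)) (min_le_right _ _)⟩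
      have hsuppn₁ : ∀ x, (-χ) x ≠ 0 → ∃ z ∈ Ξ, dist x z < δ₁ := by
        intro x hx
        exact hsupp₁ x (fun hh0 => hx (by simp [hh0]))
      have hsuppn₂ : ∀ x, (-χ) x ≠ 0 → ∃ z ∈ Ξ, dist x z < δ₂ := by
        intro x hx
        exact hsupp₂ x (fun hh0 => hx (by simp [hh0]))
      have hb₁ : |v₁ χ| ≤ ε * (1 + ‖v₁‖) := by
        refine abs_le.mpr ⟨?_, hs₁ χ hχnorm hsupp₁⟩
        have := hs₁ (-χ) (by rwa [norm_neg]) hsuppn₁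
        rw [map_neg] at this
        linarith
      have hb₂ : |v₂ χ| ≤ ε * (1 + ‖v₂‖) := by
        refine abs_le.mpr ⟨?_, hs₂ χ hχnorm hsupp₂⟩
        have := hs₂ (-χ) (by rwa [norm_neg]) hsuppn₂
        rw [map_neg] at this
        linarith
      have hdχ : (v₁ - v₂) χ = inner ℝ (c z₀) h := by
        rw [hc, ContinuousLinearMap.sum_apply]
        rw [Finset.sum_eq_single_of_mem z₀ hz₀]
        · rw [dirac_apply']
          congr 1
          rw [hχ, constL_apply, hf1, one_smul]
        · intro z hz hne
          rw [dirac_apply', hχ, constL_apply, hf2 z hz hne, zero_smul, inner_zero_right]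
      have : |(inner ℝ (c z₀) h : ℝ)| ≤ ε * (1 + ‖v₁‖) + ε * (1 + ‖v₂‖) := by
        rw [← hdχ]
        have : (v₁ - v₂) χ = v₁ χ - v₂ χ := rfl
        rw [this]
        calc |v₁ χ - v₂ χ| ≤ |v₁ χ| + |v₂ χ| := abs_sub _ _
          _ ≤ _ := add_le_add hb₁ hb₂
      rw [zero_add]
      calc |(inner ℝ (c z₀) h : ℝ)| ≤ ε * (1 + ‖v₁‖) + ε * (1 + ‖v₂‖) := this
        _ = ε * M := by rw [hM]; ring
        _ = ε' := by rw [hε]; field_simp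
    have h0 := le_of_forall_pos_le_add key
    exact abs_eq_zero.mp (le_antisymm h0 (abs_nonneg _))
  have hczero : ∀ z ∈ Ξ, c z = 0 := by
    intro z hz
    set t : ℝ := (max 1 ‖c z‖)⁻¹ with ht
    have htpos : 0 < max 1 ‖c z‖ := lt_of_lt_of_le one_pos (le_max_left _ _)
    have hh : ‖t • c z‖ ≤ 1 := by
      rw [norm_smul, ht, Real.norm_eq_abs, abs_of_nonneg (inv_nonneg.mpr htpos.le)]
      rw [inv_mul_le_iff₀ htpos, mul_one]
      exact le_max_right _ _
    have := hinner z hz (t • c z) hh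
    rw [real_inner_smul_right] at this
    have hcc : (inner ℝ (c z) (c z) : ℝ) = 0 := by
      rcases mul_eq_zero.mp this with h | h
      · exact absurd h (by rw [ht]; positivity)
      · exact h
    exact inner_self_eq_zero.mp hcc
  have : (∑ z ∈ Ξ, dirac (c z) z : StrongDual ℝ C(D, H)) = 0 := by
    refine Finset.sum_eq_zero fun z hz => ?_
    rw [hczero z hz]
    ext ψ
    rw [dirac_apply', inner_zero_left]
    rfl
  rw [this] at hc
  exact sub_eq_zero.mp hc

end Helpers5
section Helpers6
set_option maxHeartbeats 1000000

open NormedSpace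

variable {D H : Type*} [MetricSpace D] [CompactSpace D]
  [NormedAddCommGroup H] [InnerProductSpace ℝ H]

lemma hpt_lemma (invw : C(D, ℝ)) (hpos : ∀ z : D, 0 ≤ invw z) (φ : C(D, H)) (z : D) :
    invw z * ‖φ z‖ = ‖mulBy invw φ z‖ := by
  rw [mulBy_apply', norm_smul, Real.norm_eq_abs, abs_of_nonneg (hpos z)]

lemma wPairings_ub (invw : C(D, ℝ)) (hpos : ∀ z : D, 0 ≤ invw z)
    (v : StrongDual ℝ C(D, H)) :
    ∀ r ∈ wPairings invw (Wmap invw v), r ≤ ‖v‖ := by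
  rintro r ⟨φ, hφ, rfl⟩
  rw [Wmap_apply']
  calc v (mulBy invw φ) ≤ |v (mulBy invw φ)| := le_abs_self _
    _ ≤ ‖v‖ * ‖mulBy invw φ‖ := v.le_opNorm _
    _ ≤ ‖v‖ * 1 := mul_le_mul_of_nonneg_left (norm_mulBy_le_one invw hpos φ hφ)
        (norm_nonneg v)
    _ = ‖v‖ := mul_one _

lemma wPairings_zero_mem (invw : C(D, ℝ)) (u : StrongDual ℝ C(D, H)) :
    (0 : ℝ) ∈ wPairings invw u :=
  ⟨0, fun z => by simp, (map_zero u).symm⟩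

lemma isometry_lemma (Ξ : Finset D) (invw : C(D, ℝ)) (hpos : ∀ z : D, 0 ≤ invw z)
    (hzero : ∀ z : D, invw z = 0 ↔ z ∈ Ξ) (v : StrongDual ℝ C(D, H))
    (hv : vanishesOn Ξ v) : sSup (wPairings invw (Wmap invw v)) = ‖v‖ := by
  have hub := wPairings_ub invw hpos v
  have hne : (wPairings invw (Wmap invw v)).Nonempty := ⟨0, wPairings_zero_mem _ _⟩
  have hbdd : BddAbove (wPairings invw (Wmap invw v)) := ⟨‖v‖, hub⟩
  refine le_antisymm (csSup_le hne hub) ?_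
  refine le_of_forall_pos_le_add fun ε' hε' => ?_
  set ε : ℝ := ε' / (2 + 2 * ‖v‖) with hεdef
  have hε : 0 < ε := by positivity
  obtain ⟨φ₀, hφ₀1, hφ₀Ξ, hφ₀v⟩ := hv ε hε
  obtain ⟨φ, hφle, hφclose⟩ := approx_lemma Ξ invw hpos hzero φ₀ hφ₀Ξ hε
  have hmem : v (mulBy invw φ) ∈ wPairings invw (Wmap invw v) := by
    refine ⟨φ, fun z => ?_, rfl⟩
    rw [hpt_lemma invw hpos]
    exact le_trans (hφle z) (le_trans (φ₀.norm_coe_le_norm z) hφ₀1)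
  have h1 : v φ₀ - v (mulBy invw φ) ≤ ‖v‖ * ε := by
    have : v φ₀ - v (mulBy invw φ) = v (φ₀ - mulBy invw φ) := (map_sub v _ _).symm
    rw [this]
    calc v (φ₀ - mulBy invw φ) ≤ |v (φ₀ - mulBy invw φ)| := le_abs_self _
      _ ≤ ‖v‖ * ‖φ₀ - mulBy invw φ‖ := v.le_opNorm _
      _ ≤ ‖v‖ * ε := by
          rw [norm_sub_rev]
          exact mul_le_mul_of_nonneg_left hφclose (norm_nonneg v)
  have h2 := le_csSup hbdd hmem
  have hεε' : ε * (1 + ‖v‖) ≤ ε' := by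
    rw [hεdef]
    rw [div_mul_eq_mul_div, div_le_iff₀ (by positivity : (0:ℝ) < 2 + 2 * ‖v‖)]
    nlinarith [norm_nonneg v, hε'.le]
  nlinarith [norm_nonneg v]

lemma surj_lemma (Ξ : Finset D) (invw : C(D, ℝ)) (hpos : ∀ z : D, 0 ≤ invw z)
    (hzero : ∀ z : D, invw z = 0 ↔ z ∈ Ξ) (u : StrongDual ℝ C(D, H))
    (hbdd : BddAbove (wPairings invw u)) :
    ∃ v : StrongDual ℝ C(D, H), vanishesOn Ξ v ∧ Wmap invw v = u := by
  classical
  set C : ℝ := sSup (wPairings invw u) with hCdef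
  have hC0 : 0 ≤ C := le_csSup hbdd (wPairings_zero_mem _ _)
  have hCle : ∀ φ : C(D, H), (∀ z, invw z * ‖φ z‖ ≤ 1) → u φ ≤ C :=
    fun φ hφ => le_csSup hbdd ⟨φ, hφ, rfl⟩
  -- the fundamental bound
  have hbd : ∀ φ : C(D, H), u φ ≤ C * ‖mulBy invw φ‖ := by
    intro φ
    have key : ∀ t : ℝ, ‖mulBy invw (H := H) φ‖ < t → u φ ≤ C * t := by
      intro t ht
      have htpos : 0 < t := lt_of_le_of_lt (norm_nonneg _) ht
      have hcond : ∀ z, invw z * ‖(t⁻¹ • φ) z‖ ≤ 1 := by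
        intro z
        have heq : (t⁻¹ • φ) z = t⁻¹ • (φ z) := rfl
        rw [heq, norm_smul, Real.norm_eq_abs, abs_of_nonneg (inv_nonneg.mpr htpos.le)]
        have h1 : invw z * ‖φ z‖ ≤ t := by
          rw [hpt_lemma invw hpos]
          exact le_trans ((mulBy invw φ).norm_coe_le_norm z) ht.le
        calc invw z * (t⁻¹ * ‖φ z‖) = t⁻¹ * (invw z * ‖φ z‖) := by ring
          _ ≤ t⁻¹ * t := mul_le_mul_of_nonneg_left h1 (inv_nonneg.mpr htpos.le)
          _ = 1 := inv_mul_cancel₀ htpos.ne'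
      have h2 := hCle _ hcond
      rw [map_smul, smul_eq_mul] at h2
      have h3 := (inv_mul_le_iff₀ htpos).mp h2
      linarith [h3]
    refine le_of_forall_pos_le_add fun ε hε => ?_
    have h4 := key (‖mulBy invw (H := H) φ‖ + ε / (C + 1))
      (lt_add_of_pos_right _ (by positivity))
    have h5 : C * (ε / (C + 1)) ≤ ε := by
      rw [mul_div_assoc']
      rw [div_le_iff₀ (by positivity : (0:ℝ) < C + 1)]
      nlinarith
    nlinarith [h4]
  -- the subspace and the lifted functional
  set T : C(D, H) →ₗ[ℝ] C(D, H) := (mulBy invw).toLinearMap with hTdef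
  have hTφ : ∀ φ : C(D, H), T φ = mulBy invw φ := fun φ => rfl
  set p : Submodule ℝ C(D, H) := LinearMap.range T with hpdef
  have hker : LinearMap.ker T ≤ LinearMap.ker (u : C(D, H) →ₗ[ℝ] ℝ) := by
    intro φ hφ
    rw [LinearMap.mem_ker] at hφ ⊢
    have h1 : u φ ≤ C * ‖mulBy invw φ‖ := hbd φ
    have h2 : u (-φ) ≤ C * ‖mulBy invw (-φ)‖ := hbd (-φ)
    rw [map_neg, map_neg] at h2
    rw [hTφ] at hφ
    rw [hφ, norm_zero, mul_zero] at h1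
    rw [hφ, neg_zero, norm_zero, mul_zero] at h2
    show u φ = 0
    linarith
  set e := LinearMap.quotKerEquivRange T with hedef
  set f₀ : p →ₗ[ℝ] ℝ :=
    ((LinearMap.ker T).liftQ (u : C(D, H) →ₗ[ℝ] ℝ) hker).comp e.symm.toLinearMap with hf₀def
  have hf₀ : ∀ φ : C(D, H), f₀ ⟨T φ, LinearMap.mem_range_self T φ⟩ = u φ := by
    intro φ
    have h1 : e.symm ⟨T φ, LinearMap.mem_range_self T φ⟩ = Submodule.Quotient.mk φ := by
      rw [LinearEquiv.symm_apply_eq]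
      exact Subtype.ext (LinearMap.quotKerEquivRange_apply_mk T φ).symm
    rw [hf₀def]
    simp only [LinearMap.coe_comp, LinearEquiv.coe_coe, Function.comp_apply, h1,
      Submodule.liftQ_apply]
    rfl
  have hf₀bd : ∀ ψ : p, f₀ ψ ≤ C * ‖ψ‖ := by
    intro ψ
    obtain ⟨φ, hφ⟩ := ψ.2
    have h1 : ψ = ⟨T φ, LinearMap.mem_range_self T φ⟩ := Subtype.ext hφ.symm
    rw [h1, hf₀ φ]
    have h2 : ‖(⟨T φ, LinearMap.mem_range_self T φ⟩ : p)‖ = ‖mulBy invw φ‖ := rfl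
    rw [h2]
    exact hbd φ
  have hf₀abs : ∀ ψ : p, ‖f₀ ψ‖ ≤ C * ‖ψ‖ := by
    intro ψ
    rw [Real.norm_eq_abs]
    refine abs_le.mpr ⟨?_, hf₀bd ψ⟩
    have := hf₀bd (-ψ)
    rw [map_neg, norm_neg] at this
    linarith
  set f : p →L[ℝ] ℝ := f₀.mkContinuous C hf₀abs with hfdef
  obtain ⟨g, hg, hgnorm⟩ := exists_extension_norm_eq p f
  have hgT : ∀ φ : C(D, H), g (mulBy invw φ) = u φ := by
    intro φ
    have h1 : (mulBy invw φ : C(D, H)) = ((⟨T φ, LinearMap.mem_range_self T φ⟩ : p) : C(D, H)) := rfl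
    rw [h1, hg]
    rw [hfdef]
    rw [LinearMap.mkContinuous_apply]
    exact hf₀ φ
  refine ⟨g, ?_, ?_⟩
  · -- vanishesOn
    intro ε hε
    by_cases hcase : ‖g‖ ≤ ε
    · exact ⟨0, by simp, fun z _ => rfl, by rw [map_zero]; linarith⟩
    · push_neg at hcase
      have hlt : ‖g‖ - ε < ‖f‖ := by rw [← hgnorm]; linarith
      obtain ⟨x, hx1, hx2⟩ := f.exists_lt_apply_of_lt_opNorm hlt
      have hxΞ : ∀ z ∈ Ξ, (x : C(D, H)) z = 0 := by
        intro z hz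
        obtain ⟨φ₀, hφ₀⟩ := x.2
        rw [← hφ₀]
        show invw z • φ₀ z = 0
        rw [(hzero z).mpr hz, zero_smul]
      rcases le_or_gt 0 (f x) with hsign | hsign
      · refine ⟨(x : C(D, H)), hx1.le, hxΞ, ?_⟩
        rw [hg x]
        rw [Real.norm_eq_abs, abs_of_nonneg hsign] at hx2
        linarith
      · refine ⟨-(x : C(D, H)), by rw [norm_neg]; exact hx1.le, fun z hz => by rw [ContinuousMap.neg_apply, hxΞ z hz, neg_zero], ?_⟩
        have hneg : (-(x : C(D, H)) : C(D, H)) = ((-x : p) : C(D, H)) := rfl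
        rw [hneg, hg (-x), map_neg]
        rw [Real.norm_eq_abs, abs_of_neg hsign] at hx2
        linarith
  · -- Wmap invw g = u
    ext φ
    rw [Wmap_apply']
    exact hgT φ

end Helpers6


/-- For `D` compact, `Ξ ⊂ D` finite, and a weight `w : D → ℝ ∪ {+∞}`
with `1/w` continuous on `D`, positive off `Ξ` and `w ≡ +∞` on `Ξ` (i.e. `invw = 1/w`
continuous, nonnegative, vanishing exactly on `Ξ`), the map `W : M(D,H) → M_w(D,H)`,
`dW(v) = (1/w) v' d|v|`, is well defined (maps into `M_w`) and surjective onto `M_w`,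
its kernel consists exactly of the measures supported on `Ξ` (finite combinations of
Diracs at points of `Ξ`), and its restriction to `M(D ∖ Ξ, H)` is an isometric
isomorphism onto `M_w(D,H)`, with `‖W v‖_{M_w} = ‖v‖_{M}`. -/
theorem reweighting_isometric_isomorphism
    (D H : Type*) [MetricSpace D] [CompactSpace D]
    [NormedAddCommGroup H] [InnerProductSpace ℝ H] [CompleteSpace H]
    [TopologicalSpace.SeparableSpace H]
    (Ξ : Finset D) (invw : C(D, ℝ))
    (hpos : ∀ z : D, 0 ≤ invw z)
    (hzero : ∀ z : D, invw z = 0 ↔ z ∈ Ξ) :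
    -- `W` is well defined from `M(D,H)` into `M_w(D,H)`:
    (∀ v : StrongDual ℝ C(D, H), BddAbove (wPairings invw (Wmap invw v))) ∧
    -- the kernel of `W` consists of the measures supported on `Ξ`:
    (∀ v : StrongDual ℝ C(D, H),
      Wmap invw v = 0 ↔ ∃ c : D → H, v = ∑ z ∈ Ξ, dirac (c z) z) ∧
    -- `W` restricted to `M(D ∖ Ξ, H)` is injective:
    (∀ v₁ v₂ : StrongDual ℝ C(D, H), vanishesOn Ξ v₁ → vanishesOn Ξ v₂ →
      Wmap invw v₁ = Wmap invw v₂ → v₁ = v₂) ∧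
    -- `W` maps `M(D ∖ Ξ, H)` onto `M_w(D,H)`  (in particular `W` is surjective):
    (∀ u : StrongDual ℝ C(D, H), BddAbove (wPairings invw u) →
      ∃ v : StrongDual ℝ C(D, H), vanishesOn Ξ v ∧ Wmap invw v = u) ∧
    -- and it is isometric: `‖W v‖_{M_w} = ∫ w d|W v| = ‖v‖_M`:
    (∀ v : StrongDual ℝ C(D, H), vanishesOn Ξ v →
      sSup (wPairings invw (Wmap invw v)) = ‖v‖) := by
  refine ⟨fun v => ⟨‖v‖, wPairings_ub invw hpos v⟩,
    fun v => kernel_iff Ξ invw hpos hzero v,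
    fun v₁ v₂ h₁ h₂ hW => injective_on_vanishesOn Ξ invw hpos hzero v₁ v₂ h₁ h₂ hW,
    fun u hbdd => surj_lemma Ξ invw hpos hzero u hbdd,
    fun v hv => isometry_lemma Ξ invw hpos hzero v hv⟩
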